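/- arXiv:2509.24277 — 2 statements merged into one kernel-verified Lean document; each statement's English description precedes it below -/
import Mathlib

section
/- Suppose n ≥ 1 and the dataset is nonseparable, and let J* = inf_θ J(θ). Then the logistic loss cannot satisfy the K∞-PL condition: there is no class K∞ function μ (i.e., μ : ℝ_{≥0} → ℝ_{≥0} continuous, strictly increasing, μ(0) = 0, and μ(r) → ∞ as r → ∞) such that ‖∇J(θ)‖ ≥ μ( J(θ) − J* ) for all θ ∈ ℝ^n. -/
open scoped RealInnerProductSpace

/-!
The per-sample loss `log (1 + exp (-s)) + (1 - y) s` is Lipschitz in the logit `s`, so the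
logistic risk is Lipschitz and its gradient is bounded. On the other hand, nonseparability says
that every direction `v ≠ 0` misclassifies some sample, and along the ray `t • v` the loss of
that sample, hence the risk, grows linearly in `t`. So `J θ - J*` is unbounded, and a `K∞`
function `μ` of it cannot stay below the bounded `‖∇J θ‖`.
-/

open Real Set Filter
open scoped NNReal

theorem LipschitzWith.finset_sum {ι α E : Type*} [PseudoEMetricSpace α]
    [SeminormedAddCommGroup E] (s : Finset ι) {f : ι → α → E} {K : ι → ℝ≥0}
    (hf : ∀ i ∈ s, LipschitzWith (K i) (f i)) :
    LipschitzWith (∑ i ∈ s, K i) fun a => ∑ i ∈ s, f i a := by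
  classical
  induction s using Finset.induction_on with
  | empty => simpa using LipschitzWith.const (0 : E)
  | insert j s hj ih =>
    simp only [Finset.sum_insert hj]
    exact (hf j (s.mem_insert_self j)).add (ih fun i hi => hf i (Finset.mem_insert_of_mem hi))

theorem LipschitzWith.not_forall_le_norm_gradient {E : Type*} [NormedAddCommGroup E]
    [InnerProductSpace ℝ E] [CompleteSpace E] {f : E → ℝ} {K : ℝ≥0} (hf : LipschitzWith K f)
    (hf_top : ¬ BddAbove (range f)) {μ : ℝ → ℝ} (hμ : Tendsto μ atTop atTop) (c : ℝ) :
    ¬ ∀ θ, μ (f θ - c) ≤ ‖gradient f θ‖ := by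
  intro hPL
  obtain ⟨R, hR⟩ := eventually_atTop.mp (hμ.eventually_ge_atTop (K + 1))
  obtain ⟨_, ⟨θ, rfl⟩, hθ⟩ := not_bddAbove_iff.mp hf_top (R + c)
  have hgrad : ‖gradient f θ‖ ≤ K := by
    rw [gradient, LinearIsometryEquiv.norm_map]
    exact norm_fderiv_le_of_lipschitz ℝ hf
  linarith [hR (f θ - c) (by linarith), hPL θ]

theorem neg_le_log_one_add_exp_neg (s : ℝ) : -s ≤ log (1 + exp (-s)) := by
  simpa only [log_exp] using log_le_log (exp_pos (-s)) (le_add_of_nonneg_left zero_le_one)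

theorem log_one_add_exp_neg_nonneg (s : ℝ) : 0 ≤ log (1 + exp (-s)) :=
  log_nonneg (by linarith [exp_pos (-s)])

theorem lipschitzWith_log_one_add_exp_neg : LipschitzWith 1 fun s : ℝ => log (1 + exp (-s)) := by
  refine LipschitzWith.of_le_add fun s t => ?_
  have hbound : 1 + exp (-s) ≤ exp (dist s t) * (1 + exp (-t)) := by
    have h1 : 1 ≤ exp (dist s t) := one_le_exp dist_nonneg
    have h2 : exp (-s) ≤ exp (dist s t) * exp (-t) := by
      rw [← exp_add]
      exact exp_le_exp.mpr (by linarith [neg_abs_le (s - t), Real.dist_eq s t])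
    linarith
  calc log (1 + exp (-s)) ≤ log (exp (dist s t) * (1 + exp (-t))) :=
        log_le_log (by positivity) hbound
    _ = log (1 + exp (-t)) + dist s t := by
        rw [log_mul (exp_pos _).ne' (by positivity : (0 : ℝ) < 1 + exp (-t)).ne', log_exp,
          add_comm]

noncomputable def logisticLoss (y s : ℝ) : ℝ := log (1 + exp (-s)) + (1 - y) * s

theorem mul_log_sigmoid_add_mul_log_one_sub_sigmoid (y s : ℝ) :
    y * log (1 / (1 + exp (-s))) + (1 - y) * log (1 - 1 / (1 + exp (-s))) =
      -logisticLoss y s := by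
  have hpos : 0 < 1 + exp (-s) := by positivity
  have hsub : 1 - 1 / (1 + exp (-s)) = exp (-s) / (1 + exp (-s)) := by
    field_simp
    ring
  rw [hsub, log_div (exp_pos _).ne' hpos.ne', log_exp, one_div, log_inv, logisticLoss]
  ring

theorem logisticLoss_nonneg {y : ℝ} (hy₀ : 0 ≤ y) (hy₁ : y ≤ 1) (s : ℝ) :
    0 ≤ logisticLoss y s := by
  unfold logisticLoss
  rcases le_total 0 s with hs | hs
  · nlinarith [log_one_add_exp_neg_nonneg s]
  · nlinarith [neg_le_log_one_add_exp_neg s]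

theorem mul_le_logisticLoss {y : ℝ} (hy₀ : 0 ≤ y) (hy₁ : y ≤ 1) (s : ℝ) :
    (1 - 2 * y) * s ≤ logisticLoss y s := by
  unfold logisticLoss
  rcases le_total 0 s with hs | hs
  · nlinarith [log_one_add_exp_neg_nonneg s]
  · nlinarith [neg_le_log_one_add_exp_neg s]

theorem lipschitzWith_logisticLoss (y : ℝ) :
    LipschitzWith (1 + ‖1 - y‖₊) (logisticLoss y) :=
  lipschitzWith_log_one_add_exp_neg.add (lipschitzWith_smul (1 - y))

section Risk

variable {E : Type*} [NormedAddCommGroup E] [InnerProductSpace ℝ E] {N : ℕ}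

noncomputable def logisticRisk (x : Fin N → E) (y : Fin N → ℝ) (θ : E) : ℝ :=
  (N : ℝ)⁻¹ * ∑ i, logisticLoss (y i) ⟪θ, x i⟫

theorem exists_lipschitzWith_logisticRisk (x : Fin N → E) (y : Fin N → ℝ) :
    ∃ K, LipschitzWith K (logisticRisk x y) := by
  have hterm : ∀ i ∈ Finset.univ, LipschitzWith ((1 + ‖1 - y i‖₊) * ‖innerSLFlip ℝ (x i)‖₊)
      fun θ : E => logisticLoss (y i) ⟪θ, x i⟫ := fun i _ =>
    (lipschitzWith_logisticLoss (y i)).comp (innerSLFlip ℝ (x i)).lipschitz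
  exact ⟨_, (lipschitzWith_smul (N : ℝ)⁻¹).comp (LipschitzWith.finset_sum _ hterm)⟩

theorem mul_le_logisticRisk {x : Fin N → E} {y : Fin N → ℝ} (hy : ∀ i, y i ∈ Icc 0 1)
    (θ : E) (i : Fin N) :
    (N : ℝ)⁻¹ * ((1 - 2 * y i) * ⟪θ, x i⟫) ≤ logisticRisk x y θ := by
  refine mul_le_mul_of_nonneg_left ?_ (by positivity)
  calc (1 - 2 * y i) * ⟪θ, x i⟫ ≤ logisticLoss (y i) ⟪θ, x i⟫ :=
        mul_le_logisticLoss (hy i).1 (hy i).2 _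
    _ ≤ ∑ j, logisticLoss (y j) ⟪θ, x j⟫ :=
        Finset.single_le_sum (f := fun j => logisticLoss (y j) ⟪θ, x j⟫)
          (fun j _ => logisticLoss_nonneg (hy j).1 (hy j).2 _) (Finset.mem_univ i)

theorem not_bddAbove_range_logisticRisk {x : Fin N → E} {y : Fin N → ℝ}
    (hy : ∀ i, y i ∈ Icc 0 1) {v : E} {i : Fin N} (hi : 0 < (1 - 2 * y i) * ⟪v, x i⟫) :
    ¬ BddAbove (range (logisticRisk x y)) := by
  rintro ⟨M, hM⟩
  have hN : (0 : ℝ) < N := Nat.cast_pos.mpr i.pos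
  set c := (N : ℝ)⁻¹ * ((1 - 2 * y i) * ⟪v, x i⟫) with hc_def
  have hc : 0 < c := by positivity
  have hgrowth := mul_le_logisticRisk (x := x) hy (((|M| + 1) / c) • v) i
  have hslope : (N : ℝ)⁻¹ * ((1 - 2 * y i) * ⟪((|M| + 1) / c) • v, x i⟫) = |M| + 1 := by
    calc _ = (|M| + 1) / c * c := by rw [real_inner_smul_left, hc_def]; ring
      _ = |M| + 1 := div_mul_cancel₀ _ hc.ne'
  linarith [hM (mem_range_self (((|M| + 1) / c) • v)), le_abs_self M]

/-- `1 - 2 * y` is the sign `∓1` of the label `y ∈ {1, 0}`, so `0 < (1 - 2 * y i) * ⟪v, x i⟫`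
says that the direction `v` misclassifies the sample `i`. -/
theorem exists_misclassified {x : Fin N → E} {y : Fin N → ℝ}
    (hns : ¬ ∃ v : E, v ≠ 0 ∧ (∀ i, y i = 1 → 0 ≤ ⟪v, x i⟫) ∧ (∀ i, y i = 0 → ⟪v, x i⟫ ≤ 0))
    {v : E} (hv : v ≠ 0) : ∃ i, 0 < (1 - 2 * y i) * ⟪v, x i⟫ := by
  by_contra! hsep
  refine hns ⟨v, hv, fun i hi => ?_, fun i hi => ?_⟩ <;> linarith [hsep i, hi ▸ hsep i]

end Risk

theorem stmt_12_general (n N : ℕ) (hn : 1 ≤ n)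
    (x : Fin N → EuclideanSpace ℝ (Fin n)) (y : Fin N → ℝ)
    (hy : ∀ i, y i = 0 ∨ y i = 1)
    (σ : ℝ → ℝ) (hσ : ∀ s, σ s = 1 / (1 + Real.exp (-s)))
    (J : EuclideanSpace ℝ (Fin n) → ℝ)
    (hJ : ∀ θ, J θ = -(1 / (N : ℝ)) * ∑ i, (y i * Real.log (σ ⟪θ, x i⟫) +
      (1 - y i) * Real.log (1 - σ ⟪θ, x i⟫)))
    (hns : ¬ ∃ v : EuclideanSpace ℝ (Fin n), v ≠ 0 ∧
      (∀ i, y i = 1 → 0 ≤ ⟪v, x i⟫) ∧ (∀ i, y i = 0 → ⟪v, x i⟫ ≤ 0))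
    (Jstar : ℝ) :
    ¬ ∃ μ : ℝ → ℝ, ContinuousOn μ (Set.Ici (0 : ℝ)) ∧ StrictMonoOn μ (Set.Ici (0 : ℝ)) ∧
      μ 0 = 0 ∧ (∀ r : ℝ, 0 ≤ r → 0 ≤ μ r) ∧
      Filter.Tendsto μ Filter.atTop Filter.atTop ∧
      ∀ θ : EuclideanSpace ℝ (Fin n), μ (J θ - Jstar) ≤ ‖gradient J θ‖ := by
  rintro ⟨μ, -, -, -, -, hμ, hPL⟩
  have hJ_eq : J = logisticRisk x y := funext fun θ => by
    simp only [hJ, hσ, mul_log_sigmoid_add_mul_log_one_sub_sigmoid, Finset.sum_neg_distrib,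
      logisticRisk]
    ring
  have hy_Icc : ∀ i, y i ∈ Icc 0 1 := fun i => by rcases hy i with h | h <;> simp [h]
  have : Nonempty (Fin n) := ⟨⟨0, hn⟩⟩
  obtain ⟨v, hv⟩ := exists_ne (0 : EuclideanSpace ℝ (Fin n))
  obtain ⟨i, hi⟩ := exists_misclassified hns hv
  obtain ⟨K, hK⟩ := exists_lipschitzWith_logisticRisk x y
  subst hJ_eq
  exact hK.not_forall_le_norm_gradient (not_bddAbove_range_logisticRisk hy_Icc hi) hμ Jstar hPL

/-- if `n ≥ 1` and the dataset is nonseparable, the logistic loss cannot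
satisfy a `K∞`-PL condition: there is no continuous, strictly increasing, unbounded
function `μ` with `μ(0) = 0` such that `‖∇J(θ)‖ ≥ μ(J(θ) − J*)` for all `θ`. -/
theorem stmt_12 (n N : ℕ) (hn : 1 ≤ n) (hN : 1 ≤ N)
    (x : Fin N → EuclideanSpace ℝ (Fin n)) (y : Fin N → ℝ)
    (hy : ∀ i, y i = 0 ∨ y i = 1)
    (σ : ℝ → ℝ) (hσ : ∀ s, σ s = 1 / (1 + Real.exp (-s)))
    (J : EuclideanSpace ℝ (Fin n) → ℝ)
    (hJ : ∀ θ, J θ = -(1 / (N : ℝ)) * ∑ i, (y i * Real.log (σ ⟪θ, x i⟫) +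
      (1 - y i) * Real.log (1 - σ ⟪θ, x i⟫)))
    (hns : ¬ ∃ v : EuclideanSpace ℝ (Fin n), v ≠ 0 ∧
      (∀ i, y i = 1 → 0 ≤ ⟪v, x i⟫) ∧ (∀ i, y i = 0 → ⟪v, x i⟫ ≤ 0))
    (Jstar : ℝ) (hglb : IsGLB (Set.range J) Jstar) :
    ¬ ∃ μ : ℝ → ℝ, ContinuousOn μ (Set.Ici (0 : ℝ)) ∧ StrictMonoOn μ (Set.Ici (0 : ℝ)) ∧
      μ 0 = 0 ∧ (∀ r : ℝ, 0 ≤ r → 0 ≤ μ r) ∧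
      Filter.Tendsto μ Filter.atTop Filter.atTop ∧
      ∀ θ : EuclideanSpace ℝ (Fin n), μ (J θ - Jstar) ≤ ‖gradient J θ‖ :=
  stmt_12_general n N hn x y hy σ hσ J hJ hns Jstar
end

section
/- Suppose the dataset is full rank and nonseparable. Then the logistic loss J attains its infimum on ℝ^n at a unique global minimizer θ*. -/
/-!
With `s = θᵀx`, the per-sample loss is `softplus(-s) = log (1 + exp (-s))` when `y = 1` and
`softplus s` when `y = 0`, so `N * J θ = ∑ softplus (ℓᵢ θ)` with margins `ℓᵢ θ = (1 - 2 yᵢ) θᵀxᵢ`.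
Softplus is strictly convex (its derivative is the sigmoid) and dominates `max 0`.
Nonseparability says exactly that every `θ ≠ 0` has some `ℓᵢ θ > 0`. Hence the positively
homogeneous function `∑ max 0 (ℓᵢ θ)` is bounded below by `c ‖θ‖` with `c > 0`, so `J` is
coercive and attains its minimum; and the margins determine `θ`, so `J` is strictly convex and
the minimizer is unique.
-/

open Filter Set Matrix

namespace Real

noncomputable def softplus (t : ℝ) : ℝ := log (1 + exp t)

theorem hasDerivAt_softplus (t : ℝ) : HasDerivAt softplus (sigmoid t) t := by
  refine (((hasDerivAt_exp t).const_add 1).log (by positivity)).congr_deriv ?_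
  rw [sigmoid_def, exp_neg]
  field_simp
  ring

theorem deriv_softplus : deriv softplus = sigmoid :=
  funext fun t => (hasDerivAt_softplus t).deriv

theorem continuous_softplus : Continuous softplus :=
  continuous_iff_continuousAt.2 fun t => (hasDerivAt_softplus t).continuousAt

theorem strictConvexOn_softplus : StrictConvexOn ℝ univ softplus :=
  StrictMono.strictConvexOn_univ_of_deriv continuous_softplus (deriv_softplus ▸ sigmoid_strictMono)

theorem max_zero_le_softplus (t : ℝ) : max 0 t ≤ softplus t := by
  refine max_le (log_nonneg (by linarith [exp_pos t])) ?_
  calc t = log (exp t) := (log_exp t).symm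
    _ ≤ softplus t := log_le_log (exp_pos t) (by linarith)

theorem log_sigmoid (s : ℝ) : log (sigmoid s) = -softplus (-s) := by
  rw [sigmoid_def, log_inv, softplus]

theorem log_one_sub_sigmoid (s : ℝ) : log (1 - sigmoid s) = -softplus s := by
  rw [← sigmoid_neg, log_sigmoid, neg_neg]

theorem mul_log_sigmoid_add_mul_log_one_sub_sigmoid {y : ℝ} (hy : y = 0 ∨ y = 1) (s : ℝ) :
    y * log (sigmoid s) + (1 - y) * log (1 - sigmoid s) = -softplus ((1 - 2 * y) * s) := by
  rcases hy with rfl | rfl <;> norm_num [log_sigmoid, log_one_sub_sigmoid]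

end Real

theorem StrictConvexOn.sum_comp_linearMap {E ι : Type*} [AddCommGroup E] [Module ℝ E]
    [Fintype ι] {f : ι → ℝ → ℝ} (hf : ∀ i, StrictConvexOn ℝ univ (f i))
    {ℓ : ι → E →ₗ[ℝ] ℝ} (hℓ : ∀ v, (∀ i, ℓ i v = 0) → v = 0) :
    StrictConvexOn ℝ univ fun v => ∑ i, f i (ℓ i v) := by
  refine ⟨convex_univ, fun u _ v _ huv a b ha hb hab => ?_⟩
  obtain ⟨j, hj⟩ : ∃ j, ℓ j u ≠ ℓ j v := by
    by_contra! h
    exact huv (sub_eq_zero.mp (hℓ _ fun i => by rw [map_sub, h i, sub_self]))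
  calc ∑ i, f i (ℓ i (a • u + b • v))
      < ∑ i, (a • f i (ℓ i u) + b • f i (ℓ i v)) := by
        simp only [map_add, map_smul]
        exact Finset.sum_lt_sum
          (fun i _ => (hf i).convexOn.2 trivial trivial ha.le hb.le hab)
          ⟨j, Finset.mem_univ j, (hf j).2 trivial trivial hj ha hb hab⟩
    _ = a • ∑ i, f i (ℓ i u) + b • ∑ i, f i (ℓ i v) := by
        rw [Finset.sum_add_distrib, Finset.smul_sum, Finset.smul_sum]

theorem StrictConvexOn.existsUnique_forall_le {E : Type*} [TopologicalSpace E] [AddCommGroup E]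
    [Module ℝ E] {f : E → ℝ} (hf : StrictConvexOn ℝ univ f) (hcont : Continuous f)
    (hlim : Tendsto f (cocompact E) atTop) : ∃! x, ∀ y, f x ≤ f y := by
  obtain ⟨x, hx⟩ := hcont.exists_forall_le hlim
  exact ⟨x, hx, fun y hy => hf.eq_of_isMinOn (fun z _ => hy z) (fun z _ => hx z) trivial trivial⟩

section FiniteDimensional

variable {E : Type*} [NormedAddCommGroup E] [NormedSpace ℝ E] [FiniteDimensional ℝ E]

theorem exists_pos_mul_norm_le_of_posHomogeneous {φ : E → ℝ} (hφ : Continuous φ)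
    (hhom : ∀ r : ℝ, 0 ≤ r → ∀ v, φ (r • v) = r * φ v) (hpos : ∀ v ≠ 0, 0 < φ v) :
    ∃ c > 0, ∀ v, c * ‖v‖ ≤ φ v := by
  have hφ0 : φ 0 = 0 := by simpa using hhom 0 le_rfl 0
  rcases subsingleton_or_nontrivial E with hE | hE
  · exact ⟨1, one_pos, fun v => by simp [Subsingleton.elim v 0, hφ0]⟩
  obtain ⟨u, hu, hmin⟩ := (isCompact_sphere (0 : E) 1).exists_isMinOn
    (NormedSpace.sphere_nonempty.mpr zero_le_one) hφ.continuousOn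
  refine ⟨φ u, hpos u (ne_zero_of_mem_unit_sphere ⟨u, hu⟩), fun v => ?_⟩
  rcases eq_or_ne v 0 with rfl | hv
  · simp [hφ0]
  have hv' : ‖v‖⁻¹ • v ∈ Metric.sphere (0 : E) 1 := by
    simp [norm_smul, inv_mul_cancel₀ (norm_ne_zero_iff.2 hv)]
  calc φ u * ‖v‖ ≤ φ (‖v‖⁻¹ • v) * ‖v‖ := by gcongr; exact hmin hv'
    _ = φ v := by
      rw [mul_comm, ← hhom _ (norm_nonneg v), smul_inv_smul₀ (norm_ne_zero_iff.2 hv)]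

variable {ι : Type*} [Fintype ι] {ℓ : ι → E →ₗ[ℝ] ℝ}

theorem tendsto_sum_softplus_cocompact (h : ∀ v ≠ 0, ∃ i, 0 < ℓ i v) :
    Tendsto (fun v => ∑ i, Real.softplus (ℓ i v)) (cocompact E) atTop := by
  obtain ⟨c, hc, hcv⟩ := exists_pos_mul_norm_le_of_posHomogeneous
    (φ := fun v => ∑ i, max 0 (ℓ i v))
    (continuous_finsetSum _ fun i _ => continuous_const.max (ℓ i).continuous_of_finiteDimensional)
    (fun r hr v => by simp only [map_smul, smul_eq_mul, Finset.mul_sum, mul_max_of_nonneg _ _ hr,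
      mul_zero])
    (fun v hv => let ⟨i, hi⟩ := h v hv
      Finset.sum_pos' (fun i _ => le_max_left _ _) ⟨i, Finset.mem_univ i, lt_max_of_lt_right hi⟩)
  exact tendsto_atTop_mono
    (fun v => (hcv v).trans (Finset.sum_le_sum fun i _ => Real.max_zero_le_softplus _))
    (tendsto_norm_cocompact_atTop.const_mul_atTop hc)

theorem existsUnique_forall_sum_softplus_le (h : ∀ v ≠ 0, ∃ i, 0 < ℓ i v) :
    ∃! v, ∀ w, ∑ i, Real.softplus (ℓ i v) ≤ ∑ i, Real.softplus (ℓ i w) := by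
  have hinj : ∀ v, (∀ i, ℓ i v = 0) → v = 0 := fun v hv => by
    by_contra hne
    obtain ⟨i, hi⟩ := h v hne
    exact hi.ne' (hv i)
  refine (StrictConvexOn.sum_comp_linearMap (fun _ => Real.strictConvexOn_softplus) hinj)
    |>.existsUnique_forall_le ?_ (tendsto_sum_softplus_cocompact h)
  exact continuous_finsetSum _ fun i _ =>
    Real.continuous_softplus.comp (ℓ i).continuous_of_finiteDimensional

end FiniteDimensional

theorem exists_pos_margin_of_not_separable {m ι : Type*} [Fintype m] {x : ι → m → ℝ}
    {y : ι → ℝ} (hns : ¬ ∃ v : m → ℝ, v ≠ 0 ∧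
      (∀ i, y i = 1 → 0 ≤ v ⬝ᵥ x i) ∧ (∀ i, y i = 0 → v ⬝ᵥ x i ≤ 0)) :
    ∀ v ≠ 0, ∃ i, 0 < (1 - 2 * y i) * (v ⬝ᵥ x i) := by
  by_contra! h
  obtain ⟨v, hv, hle⟩ := h
  refine hns ⟨v, hv, fun i hi => ?_, fun i hi => ?_⟩ <;>
    · have := hle i
      rw [hi] at this
      linarith

theorem stmt_17_general (n N : ℕ) (hN : 1 ≤ N)
    (x : Fin N → (Fin n → ℝ)) (y : Fin N → ℝ)
    (hy : ∀ i, y i = 0 ∨ y i = 1)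
    (σ : ℝ → ℝ) (hσ : ∀ s, σ s = 1 / (1 + Real.exp (-s)))
    (J : (Fin n → ℝ) → ℝ)
    (hJ : ∀ θ, J θ = -(1 / (N : ℝ)) * ∑ i, (y i * Real.log (σ (θ ⬝ᵥ x i)) +
      (1 - y i) * Real.log (1 - σ (θ ⬝ᵥ x i))))
    (hns : ¬ ∃ v : Fin n → ℝ, v ≠ 0 ∧
      (∀ i, y i = 1 → 0 ≤ v ⬝ᵥ x i) ∧ (∀ i, y i = 0 → v ⬝ᵥ x i ≤ 0)) :
    ∃! θstar : Fin n → ℝ, ∀ θ, J θstar ≤ J θ := by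
  obtain rfl : σ = Real.sigmoid := funext fun s => by rw [hσ, one_div, Real.sigmoid_def]
  let ℓ : Fin N → (Fin n → ℝ) →ₗ[ℝ] ℝ := fun i => (1 - 2 * y i) • (dotProductBilin ℝ ℝ).flip (x i)
  have hJ' : ∀ θ, J θ = (N : ℝ)⁻¹ * ∑ i, Real.softplus (ℓ i θ) := fun θ => by
    simp only [hJ, Real.mul_log_sigmoid_add_mul_log_one_sub_sigmoid (hy _),
      Finset.sum_neg_distrib, ℓ, LinearMap.smul_apply, LinearMap.flip_apply,
      dotProductBilin_apply_apply, smul_eq_mul]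
    ring
  have hN' : (0 : ℝ) < (N : ℝ)⁻¹ := inv_pos.2 (by exact_mod_cast hN)
  simp_rw [hJ', mul_le_mul_iff_right₀ hN']
  exact existsUnique_forall_sum_softplus_le (exists_pos_margin_of_not_separable hns)

/-- if the dataset is full rank and nonseparable, the logistic loss attains
its infimum at a unique global minimizer. -/
theorem stmt_17 (n N : ℕ) (hN : 1 ≤ N)
    (x : Fin N → (Fin n → ℝ)) (y : Fin N → ℝ)
    (hy : ∀ i, y i = 0 ∨ y i = 1)
    (σ : ℝ → ℝ) (hσ : ∀ s, σ s = 1 / (1 + Real.exp (-s)))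
    (J : (Fin n → ℝ) → ℝ)
    (hJ : ∀ θ, J θ = -(1 / (N : ℝ)) * ∑ i, (y i * Real.log (σ (θ ⬝ᵥ x i)) +
      (1 - y i) * Real.log (1 - σ (θ ⬝ᵥ x i))))
    (hfullrank : Submodule.span ℝ (Set.range x) = ⊤)
    (hns : ¬ ∃ v : Fin n → ℝ, v ≠ 0 ∧
      (∀ i, y i = 1 → 0 ≤ v ⬝ᵥ x i) ∧ (∀ i, y i = 0 → v ⬝ᵥ x i ≤ 0)) :
    ∃! θstar : Fin n → ℝ, ∀ θ, J θstar ≤ J θ :=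
  stmt_17_general n N hN x y hy σ hσ J hJ hns
end
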